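/- Let Λ be a ring and 𝒳 a contravariantly finite additive subcategory of Mod Λ closed under direct products. Suppose every bounded complex of Λ-modules admits an 𝒳-quasi-isomorphism from a bounded above complex with components in 𝒳. Then every bounded above complex A of Λ-modules admits an 𝒳-quasi-isomorphism X → A with X a bounded above complex with components in 𝒳, obtained as a homotopy inverse limit of resolutions of the truncations A^{≥ i}. -/

import Mathlib

/-!
STATEMENT 15: Let `Λ` be a ring and `𝒳` a contravariantly finite additive
subcategory of `Mod Λ` closed under direct products.  Suppose every bounded
complex of `Λ`-modules admits an `𝒳`-quasi-isomorphism from a bounded above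
complex with components in `𝒳`.  Then every bounded above complex `A` of
`Λ`-modules admits an `𝒳`-quasi-isomorphism `X → A` with `X` a bounded above
complex with components in `𝒳` (in the paper, obtained as a homotopy inverse
limit of resolutions of the truncations `A^{≥ i}`).
An `𝒳`-quasi-isomorphism is a chain map `f` such that `Hom_Λ(T, f)` is a
quasi-isomorphism of complexes of abelian groups for every `T ∈ 𝒳`.
-/

open CategoryTheory Limits

universe u

noncomputable section

variable (Λ : Type u) [Ring Λ]

/-- `f` is an `𝒳`-quasi-isomorphism: `Hom(T, f)` is a quasi-isomorphism for
every `T ∈ 𝒳`. -/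
def IsXQuasiIso (𝒳 : Set (ModuleCat.{u} Λ))
    {K L : CochainComplex (ModuleCat.{u} Λ) ℤ} (f : K ⟶ L) : Prop :=
  ∀ T ∈ 𝒳,
    QuasiIso (((preadditiveCoyoneda.obj (Opposite.op T)).mapHomologicalComplex
      (ComplexShape.up ℤ)).map f)

/-- Bounded above complexes. -/
def BoundedAbove (K : CochainComplex (ModuleCat.{u} Λ) ℤ) : Prop :=
  ∃ b : ℤ, ∀ n : ℤ, b < n → IsZero (K.X n)

/-- Bounded complexes. -/
def Bounded (K : CochainComplex (ModuleCat.{u} Λ) ℤ) : Prop :=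
  ∃ a b : ℤ, ∀ n : ℤ, (n < a ∨ b < n) → IsZero (K.X n)

/-!
Since `A` is bounded above, `X` can be built one degree at a time from the top down: `X^n = 0`
above the bound, and once `X^{n+1} → A^{n+1}` is built, `X^n` is a right `𝒳`-approximation of
the object of pairs `(a, x) ∈ A^n × X^{n+1}` with `d a = f x` and `d x = 0`. For `T ∈ 𝒳`, lifting
maps from `T` into this object through the approximation shows that every cycle of `Hom(T, A)`
comes from a cycle of `Hom(T, X)`, and that a cycle of `Hom(T, X)` mapping to a boundary is
itself a boundary.
-/

lemma AddCommGrpCat.exists_lift_up_to_refinements {A X Y : AddCommGrpCat.{u}} (f : X ⟶ Y)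
    (g : A ⟶ Y) (h : ∀ a, ∃ x, f x = g a) :
    ∃ (A' : AddCommGrpCat.{u}) (π : A' ⟶ A) (_ : Epi π) (x : A' ⟶ X), π ≫ g = x ≫ f := by
  choose s hs using h
  refine ⟨of (FreeAbelianGroup A), ofHom (FreeAbelianGroup.lift id), ?_,
    ofHom (FreeAbelianGroup.lift s), ?_⟩
  · exact (epi_iff_surjective _).2 fun a => ⟨.of a, FreeAbelianGroup.lift_apply_of _ _⟩
  · ext1
    apply FreeAbelianGroup.lift_ext
    intro a
    simp [hs]

namespace HomologicalComplex

variable {ι : Type*} {c : ComplexShape ι} {K L : HomologicalComplex AddCommGrpCat.{u} c}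

lemma quasiIsoAt_of_lift_cycles_of_lift_boundaries (φ : K ⟶ L) (i j k : ι)
    (hi : c.prev j = i) (hk : c.next j = k)
    (hcycles : ∀ y : L.X j, L.d j k y = 0 → ∃ x : K.X j, K.d j k x = 0 ∧ φ.f j x = y)
    (hboundaries : ∀ x : K.X j, K.d j k x = 0 → ∀ y : L.X i, φ.f j x = L.d i j y →
      ∃ x' : K.X i, K.d i j x' = x) :
    QuasiIsoAt φ j := by
  rw [quasiIsoAt_iff_isIso_homologyMap, isIso_iff_mono_and_epi]
  constructor
  · rw [mono_homologyMap_iff_up_to_refinements φ i j k hi hk]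
    intro A x hx y hxy
    exact AddCommGrpCat.exists_lift_up_to_refinements _ _ fun a =>
      hboundaries (x a) (by simpa using ConcreteCategory.congr_hom hx a) (y a)
        (by simpa using ConcreteCategory.congr_hom hxy a)
  · rw [epi_homologyMap_iff_up_to_refinements φ i j k hi hk]
    intro A y hy
    obtain ⟨A', π, hπ, x, hx⟩ := AddCommGrpCat.exists_lift_up_to_refinements
      (AddCommGrpCat.ofHom (K.d j k).hom.ker.subtype ≫ φ.f j) y fun a => by
        obtain ⟨x, hx, hxy⟩ := hcycles (y a) (by simpa using ConcreteCategory.congr_hom hy a)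
        exact ⟨⟨x, hx⟩, hxy⟩
    refine ⟨A', π, hπ, x ≫ AddCommGrpCat.ofHom (K.d j k).hom.ker.subtype, ?_, 0, ?_⟩
    · ext a
      exact (x a).2
    · simpa using hx

end HomologicalComplex

section

open ZeroObject

variable {C : Type*} [Category C] [Preadditive C]

structure RightApproximation (𝒳 : Set C) (N : C) where
  obj : C
  mem : obj ∈ 𝒳
  π : obj ⟶ N
  exists_lift : ∀ T ∈ 𝒳, ∀ g : T ⟶ N, ∃ h : T ⟶ obj, h ≫ π = g

namespace CochainComplex

/-- `X` is the degree `n` term of the resolution, `next` the degree `n + 1` term. -/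
structure ResolutionStage (A : CochainComplex C ℤ) (n : ℤ) where
  X : C
  next : C
  d : X ⟶ next
  f : X ⟶ A.X n

namespace ResolutionStage

variable {𝒳 : Set C} {A : CochainComplex C ℤ}

def zero [HasZeroObject C] (n : ℤ) : ResolutionStage A n := ⟨0, 0, 0, 0⟩

variable [HasKernels C] [HasPullbacks C] (approx : ∀ N : C, RightApproximation 𝒳 N)
  {n : ℤ} (s : ResolutionStage A (n + 1))

/-- The object of pairs `(a, x) ∈ A^n × X^{n+1}` with `d a = f x` and `d x = 0`. -/
abbrev pairs : C :=
  pullback (A.d n (n + 1)) (kernel.ι s.d ≫ s.f)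

abbrev step : ResolutionStage A n where
  X := (approx s.pairs).obj
  next := s.X
  d := (approx s.pairs).π ≫ pullback.snd _ _ ≫ kernel.ι s.d
  f := (approx s.pairs).π ≫ pullback.fst _ _

lemma step_d_comp_f : (step approx s).d ≫ s.f = (step approx s).f ≫ A.d n (n + 1) := by
  simp [pullback.condition]

lemma step_exists_lift {T : C} (hT : T ∈ 𝒳) (a : T ⟶ A.X n) (x : T ⟶ s.X) (hx : x ≫ s.d = 0)
    (hxa : x ≫ s.f = a ≫ A.d n (n + 1)) :
    ∃ h : T ⟶ (step approx s).X, h ≫ (step approx s).d = x ∧ h ≫ (step approx s).f = a := by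
  obtain ⟨h, hh⟩ := (approx s.pairs).exists_lift T hT
    (pullback.lift a (kernel.lift s.d x hx) (by rw [kernel.lift_ι_assoc, hxa]))
  have hd := hh =≫ (pullback.snd _ _ ≫ kernel.ι s.d)
  have hf := hh =≫ pullback.fst _ _
  rw [pullback.lift_snd_assoc, kernel.lift_ι, Category.assoc] at hd
  rw [pullback.lift_fst, Category.assoc] at hf
  exact ⟨h, hd, hf⟩

end ResolutionStage

open ResolutionStage

variable [HasZeroObject C] [HasKernels C] [HasPullbacks C] {𝒳 : Set C} (A : CochainComplex C ℤ)
  (approx : ∀ N : C, RightApproximation 𝒳 N) (b : ℤ)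

def resolutionStage (n : ℤ) : ResolutionStage A n :=
  if b < n then zero n else step approx (resolutionStage (n + 1))
termination_by (b + 1 - n).toNat

variable {A b} {n : ℤ}

lemma resolutionStage_of_lt (h : b < n) : A.resolutionStage approx b n = zero n := by
  rw [resolutionStage, if_pos h]

lemma resolutionStage_of_le (h : n ≤ b) :
    A.resolutionStage approx b n = step approx (A.resolutionStage approx b (n + 1)) := by
  rw [resolutionStage, if_neg (not_lt.2 h)]

lemma isZero_resolutionStage_X (h : b < n) : IsZero (A.resolutionStage approx b n).X := by
  rw [resolutionStage_of_lt approx h]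
  exact isZero_zero C

lemma resolutionStage_X_mem (h0 : (0 : C) ∈ 𝒳) (n : ℤ) : (A.resolutionStage approx b n).X ∈ 𝒳 := by
  obtain h | h := lt_or_ge b n
  · rw [resolutionStage_of_lt approx h]
    exact h0
  · rw [resolutionStage_of_le approx h]
    exact (approx _).mem

variable (A b)

lemma resolutionStage_next (n : ℤ) :
    (A.resolutionStage approx b n).next = (A.resolutionStage approx b (n + 1)).X := by
  obtain h | h := lt_or_ge b n
  · rw [resolutionStage_of_lt approx h, resolutionStage_of_lt approx (by omega)]
    rfl
  · rw [resolutionStage_of_le approx h]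

/- The type of `resolutionStage_next` mentions the stage, so it is generalized before the stage
is rewritten to a `step`. -/
lemma resolutionStage_d_comp_d (n : ℤ) :
    (A.resolutionStage approx b n).d ≫ eqToHom (A.resolutionStage_next approx b n) ≫
      (A.resolutionStage approx b (n + 1)).d = 0 := by
  obtain h | h := lt_or_ge b n
  · exact (isZero_resolutionStage_X approx h).eq_of_src _ _
  · generalize A.resolutionStage_next approx b n = e
    revert e
    rw [resolutionStage_of_le approx h]
    intro e
    simp

lemma resolutionStage_d_comp_f (n : ℤ) :
    (A.resolutionStage approx b n).d ≫ eqToHom (A.resolutionStage_next approx b n) ≫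
      (A.resolutionStage approx b (n + 1)).f =
        (A.resolutionStage approx b n).f ≫ A.d n (n + 1) := by
  obtain h | h := lt_or_ge b n
  · exact (isZero_resolutionStage_X approx h).eq_of_src _ _
  · generalize A.resolutionStage_next approx b n = e
    revert e
    rw [resolutionStage_of_le approx h]
    intro e
    simpa using step_d_comp_f approx _

variable {A b}

lemma resolutionStage_exists_lift (h : n ≤ b) {T : C} (hT : T ∈ 𝒳) (a : T ⟶ A.X n)
    (x : T ⟶ (A.resolutionStage approx b (n + 1)).X)
    (hx : x ≫ (A.resolutionStage approx b (n + 1)).d = 0)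
    (hxa : x ≫ (A.resolutionStage approx b (n + 1)).f = a ≫ A.d n (n + 1)) :
    ∃ y : T ⟶ (A.resolutionStage approx b n).X,
      y ≫ (A.resolutionStage approx b n).d ≫ eqToHom (A.resolutionStage_next approx b n) = x ∧
        y ≫ (A.resolutionStage approx b n).f = a := by
  generalize A.resolutionStage_next approx b n = e
  revert e
  rw [resolutionStage_of_le approx h]
  intro e
  simpa using step_exists_lift approx _ hT a x hx hxa

variable (A b)

abbrev resolution : CochainComplex C ℤ :=
  of (fun n => (A.resolutionStage approx b n).X)
    (fun n => (A.resolutionStage approx b n).d ≫ eqToHom (A.resolutionStage_next approx b n))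
    (fun n => by simp [reassoc_of% A.resolutionStage_d_comp_d approx b n])

def resolutionπ : A.resolution approx b ⟶ A where
  f n := (A.resolutionStage approx b n).f
  comm' := by
    rintro n _ rfl
    simpa using (A.resolutionStage_d_comp_f approx b n).symm

variable {A b}

lemma resolution_exists_lift (h : n ≤ b) {T : C} (hT : T ∈ 𝒳) (a : T ⟶ A.X n)
    (x : T ⟶ (A.resolution approx b).X (n + 1))
    (hx : x ≫ (A.resolution approx b).d (n + 1) (n + 1 + 1) = 0)
    (hxa : x ≫ (A.resolutionπ approx b).f (n + 1) = a ≫ A.d n (n + 1)) :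
    ∃ y : T ⟶ (A.resolution approx b).X n,
      y ≫ (A.resolution approx b).d n (n + 1) = x ∧ y ≫ (A.resolutionπ approx b).f n = a := by
  simp only [of_d] at hx ⊢
  rw [← Category.assoc, comp_eqToHom_iff, zero_comp] at hx
  exact resolutionStage_exists_lift approx h hT a x hx hxa

lemma quasiIso_map_resolutionπ (hb : ∀ n, b < n → IsZero (A.X n)) {T : C} (hT : T ∈ 𝒳) :
    QuasiIso (((preadditiveCoyoneda.obj (Opposite.op T)).mapHomologicalComplex
      (ComplexShape.up ℤ)).map (A.resolutionπ approx b)) := by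
  rw [quasiIso_iff]
  intro j
  obtain ⟨n, rfl⟩ : ∃ n, j = n + 1 := ⟨j - 1, by omega⟩
  apply HomologicalComplex.quasiIsoAt_of_lift_cycles_of_lift_boundaries _ n (n + 1) (n + 1 + 1)
    (by simp) (by simp)
  · intro (a : T ⟶ A.X (n + 1)) (ha : a ≫ A.d (n + 1) (n + 1 + 1) = 0)
    obtain h | h := lt_or_ge b (n + 1)
    · exact ⟨0, zero_comp, (hb _ h).eq_of_tgt _ _⟩
    · exact resolution_exists_lift approx h hT a 0 zero_comp (by simp [ha])
  · intro (x : T ⟶ (A.resolution approx b).X (n + 1)) hx (a : T ⟶ A.X n)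
      (hxa : x ≫ (A.resolutionπ approx b).f (n + 1) = a ≫ A.d n (n + 1))
    obtain h | h := lt_or_ge b n
    · exact ⟨0, ((isZero_resolutionStage_X approx (by omega)).eq_of_tgt _ _).symm⟩
    · obtain ⟨y, hy, -⟩ := resolution_exists_lift approx h hT a x hx hxa
      exact ⟨y, hy⟩

end CochainComplex

end

theorem stmt15 (𝒳 : Set (ModuleCat.{u} Λ))
    (hzero : ∀ Z : ModuleCat.{u} Λ, IsZero Z → Z ∈ 𝒳)
    -- `𝒳` is contravariantly finite
    (happrox : ∀ N : ModuleCat.{u} Λ, ∃ T ∈ 𝒳, ∃ φ : T ⟶ N,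
      ∀ T' ∈ 𝒳, ∀ ψ : T' ⟶ N, ∃ h : T' ⟶ T, h ≫ φ = ψ)
    (A : CochainComplex (ModuleCat.{u} Λ) ℤ) (hA : BoundedAbove Λ A) :
    ∃ (K : CochainComplex (ModuleCat.{u} Λ) ℤ) (f : K ⟶ A),
      (∀ n, K.X n ∈ 𝒳) ∧ BoundedAbove Λ K ∧ IsXQuasiIso Λ 𝒳 f := by
  choose T hT φ hφ using happrox
  let approx : ∀ N, RightApproximation 𝒳 N := fun N => ⟨T N, hT N, φ N, hφ N⟩
  obtain ⟨b, hb⟩ := hA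
  exact ⟨A.resolution approx b, A.resolutionπ approx b,
    A.resolutionStage_X_mem approx (hzero _ (isZero_zero _)),
    ⟨b, fun _ hn => CochainComplex.isZero_resolutionStage_X approx hn⟩,
    fun _ hT' => CochainComplex.quasiIso_map_resolutionπ approx hb hT'⟩

end
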